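/- Let P = p be an n×1 probability matrix (a probability vector) and Q an n×m joint probability matrix. Then P ≻_c Q if and only if p majorizes the conditional distribution q^{|w} for every w = 1,...,m with q_w > 0, where q_w = Σ_x q_{xw} and q^{|w} = (q_{xw}/q_w)_x. -/

import Mathlib

open Matrix Finset

/-- Row-stochastic matrix: nonnegative entries, each row sums to 1. -/
def RowStoch {ℓ m : ℕ} (T : Matrix (Fin ℓ) (Fin m) ℝ) : Prop :=
  (∀ y w, 0 ≤ T y w) ∧ ∀ y, ∑ w, T y w = 1

/-- Doubly stochastic matrix. -/
def DStoch {n : ℕ} (D : Matrix (Fin n) (Fin n) ℝ) : Prop :=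
  (∀ i j, 0 ≤ D i j) ∧ (∀ i, ∑ j, D i j = 1) ∧ (∀ j, ∑ i, D i j = 1)

/-- Conditional majorization `P ≻_c Q` via classical-conditioned random relabelings:
`Q = ∑ j, D j * P * R j` with each `D j` doubly stochastic, each `R j` entrywise
nonnegative, and `∑ j, R j` row-stochastic. -/
def CondMaj {n ℓ m : ℕ} (P : Matrix (Fin n) (Fin ℓ) ℝ)
    (Q : Matrix (Fin n) (Fin m) ℝ) : Prop :=
  ∃ (J : ℕ) (D : Fin J → Matrix (Fin n) (Fin n) ℝ)
    (R : Fin J → Matrix (Fin ℓ) (Fin m) ℝ),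
    (∀ j, DStoch (D j)) ∧ (∀ j y w, 0 ≤ R j y w) ∧
    RowStoch (∑ j, R j) ∧ Q = ∑ j, D j * P * R j

/-- Joint probability matrix: nonnegative entries summing to one. -/
def JointProb {n ℓ : ℕ} (P : Matrix (Fin n) (Fin ℓ) ℝ) : Prop :=
  (∀ x y, 0 ≤ P x y) ∧ ∑ x, ∑ y, P x y = 1

/-- Column sum (marginal). -/
noncomputable def ColSum {n m : ℕ} (Q : Matrix (Fin n) (Fin m) ℝ) (w : Fin m) : ℝ :=
  ∑ x, Q x w
/-- Nonincreasing rearrangement of a vector. -/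
noncomputable def sortDesc {n : ℕ} (u : Fin n → ℝ) : Fin n → ℝ :=
  fun i => u (Tuple.sort (fun j => -u j) i)

/-- Sum of the `k` largest entries of `u`. -/
noncomputable def pSumDesc {n : ℕ} (u : Fin n → ℝ) (k : ℕ) : ℝ :=
  ∑ i ∈ Finset.univ.filter (fun i : Fin n => (i : ℕ) < k), sortDesc u i

/-- `Majorizes u v` means `u ≻ v`: all partial sums of the sorted `u` dominate
those of `v`, and the total sums coincide. -/
def Majorizes {n : ℕ} (u v : Fin n → ℝ) : Prop :=
  (∀ k : ℕ, pSumDesc v k ≤ pSumDesc u k) ∧ ∑ i, u i = ∑ i, v i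

/-!
`u ≻ v` holds exactly when `v = D u` for a doubly stochastic `D` (Hardy–Littlewood–Pólya); by
Birkhoff's theorem these `D u` form the convex hull of the permutations of `u`. The easy half: a
top-`k` partial sum of `D u` pairs `u` with weights in `[0, 1]` summing to `min n k`, which Abel
summation against the sorted `u` bounds by the top-`k` sum of `u`. The hard half: if `v` were
outside that convex hull, a separating functional `c` would beat every `∑ c (u ∘ τ)`, but Abel
summation against the sorted `c` gives `∑ c v ≤ ∑ c (u ∘ τ)` for the `τ` that sorts `u` like `c`.

Given `Q = ∑ⱼ Dⱼ p Rⱼ`, the conditional distribution `q^{|w}` is `D' p` for the convex combination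
`D' = ∑ⱼ (Rⱼ w / q_w) Dⱼ`. Conversely, with `D_w p = q^{|w}` from Hardy–Littlewood–Pólya, taking
`R_w = q_w e_w` rebuilds `Q` column by column.
-/

open Equiv

lemma sum_filter_val_lt_eq_sum_range {M : Type*} [AddCommMonoid M] {n : ℕ} (f : ℕ → M) (k : ℕ) :
    ∑ i ∈ {i : Fin n | (i : ℕ) < k}, f i = ∑ i ∈ range (min n k), f i := by
  have : range (min n k) = ({i : Fin n | (i : ℕ) < k} : Finset (Fin n)).map Fin.valEmbedding := by
    ext i
    simp [Fin.exists_iff, and_comm]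
  rw [this, sum_map]
  rfl

lemma sum_range_mul_le_mul_sum_range {R : Type*} [CommRing R] [LinearOrder R]
    [IsStrictOrderedRing R] {d g : ℕ → R} {N : ℕ}
    (hd : ∀ i, i + 1 < N → d (i + 1) ≤ d i) (hg : ∀ k ≤ N, ∑ i ∈ range k, g i ≤ 0) :
    ∑ i ∈ range N, d i * g i ≤ d (N - 1) * ∑ i ∈ range N, g i := by
  induction N with
  | zero => simp
  | succ N ih =>
    have ih := ih (fun i hi => hd i (by omega)) (fun k hk => hg k (by omega))
    rw [sum_range_succ, sum_range_succ, Nat.add_sub_cancel, mul_add]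
    rcases Nat.eq_zero_or_pos N with rfl | hN
    · simp
    · have hdN : d N ≤ d (N - 1) := by
        simpa [Nat.sub_add_cancel hN] using hd (N - 1) (by omega)
      nlinarith [hg N (by omega)]

section Majorization

variable {n : ℕ}

lemma sum_mul_nonpos_of_antitone {d g : Fin n → ℝ} (hd : Antitone d)
    (hg : ∀ k, ∑ i ∈ {i : Fin n | (i : ℕ) < k}, g i ≤ 0)
    (hg₀ : ∑ i, g i = 0) :
    ∑ i, d i * g i ≤ 0 := by
  set d' := Function.extend Fin.val d 0
  set g' := Function.extend Fin.val g 0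
  have hd' (i : Fin n) : d' i = d i := Fin.val_injective.extend_apply d 0 i
  have hg' (i : Fin n) : g' i = g i := Fin.val_injective.extend_apply g 0 i
  have hprefix (k : ℕ) : ∑ i ∈ range (min n k), g' i = ∑ i ∈ {i : Fin n | (i : ℕ) < k}, g i := by
    simp only [← sum_filter_val_lt_eq_sum_range, hg']
  calc ∑ i, d i * g i = ∑ i ∈ range n, d' i * g' i := by
        simp only [← Fin.sum_univ_eq_sum_range, hd', hg']
    _ ≤ d' (n - 1) * ∑ i ∈ range n, g' i := by
        refine sum_range_mul_le_mul_sum_range (fun i hi => ?_) (fun k hk => ?_)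
        · simpa only [← hd' ⟨i, by omega⟩, ← hd' ⟨i + 1, hi⟩] using
            hd (show (⟨i, by omega⟩ : Fin n) ≤ ⟨i + 1, hi⟩ from Fin.mk_le_mk.2 (by omega))
        · simpa only [← hprefix, min_eq_right hk] using hg k
    _ = 0 := by
        rw [← Fin.sum_univ_eq_sum_range, Finset.sum_congr rfl fun i _ => hg' i, hg₀, mul_zero]

lemma antitone_sortDesc (u : Fin n → ℝ) : Antitone (sortDesc u) :=
  fun _ _ hij => neg_le_neg_iff.1 (Tuple.monotone_sort (fun j => -u j) hij)

lemma sum_sortDesc (u : Fin n → ℝ) : ∑ i, sortDesc u i = ∑ i, u i :=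
  Equiv.sum_comp (Tuple.sort fun j => -u j) u

lemma sum_mul_le_pSumDesc {c u : Fin n → ℝ} {k : ℕ} (hc₀ : ∀ i, 0 ≤ c i) (hc₁ : ∀ i, c i ≤ 1)
    (hc : ∑ i, c i = (min n k : ℕ)) :
    ∑ i, c i * u i ≤ pSumDesc u k := by
  set σ := Tuple.sort fun j => -u j
  set e : Fin n → ℝ := fun i => if (i : ℕ) < k then 1 else 0
  have hsum_e (j : ℕ) : ∑ i ∈ {i : Fin n | (i : ℕ) < j}, e i = (min n (min j k) : ℕ) := by
    rw [sum_boole, filter_filter, ← Fin.card_filter_val_lt (m := min j k)]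
    simp only [lt_min_iff]
  have hle (j : ℕ) : ∑ i ∈ {i : Fin n | (i : ℕ) < j}, c (σ i) ≤ (min n (min j k) : ℕ) := by
    rw [show min n (min j k) = min (min n j) (min n k) by omega, Nat.cast_min]
    refine le_min ?_ ?_
    · calc _ ≤ ∑ i ∈ {i : Fin n | (i : ℕ) < j}, (1 : ℝ) := sum_le_sum fun i _ => hc₁ _
        _ = _ := by simp [Fin.card_filter_val_lt]
    · calc _ ≤ ∑ i, c (σ i) := sum_le_sum_of_subset_of_nonneg (subset_univ _) fun i _ _ => hc₀ _
        _ = _ := by rw [Equiv.sum_comp σ c, hc]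
  have key := sum_mul_nonpos_of_antitone (antitone_sortDesc u) (g := fun i => c (σ i) - e i)
    (fun j => by simpa only [sum_sub_distrib, hsum_e, sub_nonpos] using hle j)
    (by rw [sum_sub_distrib, Equiv.sum_comp σ c, hc]; simp [e, sum_boole, Fin.card_filter_val_lt])
  have hcu : ∑ i, c i * u i = ∑ i, sortDesc u i * c (σ i) := by
    rw [← Equiv.sum_comp σ]
    simp only [sortDesc, mul_comm, σ]
  have hpsum : pSumDesc u k = ∑ i, sortDesc u i * e i := by
    simp [pSumDesc, e, sum_filter]
  simp only [mul_sub, sum_sub_distrib, sub_nonpos] at key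
  rw [hcu, hpsum]
  exact key

lemma sum_le_pSumDesc (u : Fin n → ℝ) {s : Finset (Fin n)} {k : ℕ} (hs : #s = min n k) :
    ∑ x ∈ s, u x ≤ pSumDesc u k := by
  have := sum_mul_le_pSumDesc (c := fun x => if x ∈ s then 1 else 0) (u := u) (k := k)
    (fun x => by positivity) (fun x => by split_ifs <;> norm_num) (by rw [sum_boole]; simp [hs])
  simpa [ite_mul, sum_ite_mem] using this

lemma exists_card_eq_pSumDesc_eq_sum (u : Fin n → ℝ) (k : ℕ) :
    ∃ s : Finset (Fin n), #s = min n k ∧ pSumDesc u k = ∑ x ∈ s, u x := by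
  set σ := Tuple.sort fun j => -u j
  refine ⟨({i : Fin n | (i : ℕ) < k} : Finset (Fin n)).map σ.toEmbedding, ?_, ?_⟩
  · rw [card_map, Fin.card_filter_val_lt]
  · rw [sum_map]
    rfl

lemma majorizes_mulVec {D : Matrix (Fin n) (Fin n) ℝ} (hD : D ∈ doublyStochastic ℝ (Fin n))
    (u : Fin n → ℝ) : Majorizes u (D *ᵥ u) := by
  refine ⟨fun k => ?_, (sum_mulVec_of_mem_doublyStochastic hD).symm⟩
  obtain ⟨s, hs, hk⟩ := exists_card_eq_pSumDesc_eq_sum (D *ᵥ u) k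
  have hswap : ∑ x ∈ s, (D *ᵥ u) x = ∑ y, (∑ x ∈ s, D x y) * u y := by
    simp only [mulVec, dotProduct, sum_mul]
    exact sum_comm
  rw [hk, hswap]
  refine sum_mul_le_pSumDesc (fun y => sum_nonneg fun x _ => nonneg_of_mem_doublyStochastic hD)
    (fun y => ?_) ?_
  · calc ∑ x ∈ s, D x y ≤ ∑ x, D x y := sum_le_sum_of_subset_of_nonneg (subset_univ s)
          fun x _ _ => nonneg_of_mem_doublyStochastic hD
      _ = 1 := sum_col_of_mem_doublyStochastic hD y
  · rw [sum_comm]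
    simp [sum_row_of_mem_doublyStochastic hD, hs]

lemma Majorizes.exists_perm_sum_mul_le {u v : Fin n → ℝ} (h : Majorizes u v) (c : Fin n → ℝ) :
    ∃ τ : Perm (Fin n), ∑ i, c i * v i ≤ ∑ i, c i * u (τ i) := by
  set σc := Tuple.sort fun j => -c j
  set σu := Tuple.sort fun j => -u j
  refine ⟨σc.symm.trans σu, ?_⟩
  have hprefix (k : ℕ) : ∑ i ∈ {i : Fin n | (i : ℕ) < k}, v (σc i) ≤
      ∑ i ∈ {i : Fin n | (i : ℕ) < k}, sortDesc u i := by
    have hs := sum_le_pSumDesc v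
      (s := ({i : Fin n | (i : ℕ) < k} : Finset (Fin n)).map σc.toEmbedding)
      (by rw [card_map, Fin.card_filter_val_lt])
    rw [sum_map] at hs
    exact hs.trans (h.1 k)
  have key := sum_mul_nonpos_of_antitone (antitone_sortDesc c)
    (g := fun i => v (σc i) - sortDesc u i)
    (fun k => by simpa only [sum_sub_distrib, sub_nonpos] using hprefix k)
    (by rw [sum_sub_distrib, Equiv.sum_comp σc v, sum_sortDesc, h.2, sub_self])
  have hv : ∑ i, c i * v i = ∑ i, sortDesc c i * v (σc i) :=
    (Equiv.sum_comp σc fun i => c i * v i).symm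
  have hu : ∑ i, c i * u ((σc.symm.trans σu) i) = ∑ i, sortDesc c i * sortDesc u i := by
    rw [← Equiv.sum_comp σc]
    simp [sortDesc, σc, σu]
  simp only [mul_sub, sum_sub_distrib, sub_nonpos] at key
  rwa [hv, hu]

lemma Majorizes.mem_convexHull {u v : Fin n → ℝ} (h : Majorizes u v) :
    v ∈ convexHull ℝ (Set.range fun σ : Perm (Fin n) => u ∘ σ) := by
  by_contra hv
  obtain ⟨f, b, hfS, hfv⟩ := geometric_hahn_banach_closed_point (convex_convexHull ℝ _)
    ((Set.finite_range _).isCompact_convexHull (𝕜 := ℝ)).isClosed hv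
  set c : Fin n → ℝ := fun i => f fun j => if i = j then 1 else 0
  have hf (x : Fin n → ℝ) : f x = ∑ i, c i * x i := by
    simpa only [smul_eq_mul, mul_comm, ContinuousLinearMap.coe_coe] using
      LinearMap.pi_apply_eq_sum_univ (f : (Fin n → ℝ) →ₗ[ℝ] ℝ) x
  obtain ⟨τ, hτ⟩ := h.exists_perm_sum_mul_le c
  have hfτ := hfS (u ∘ τ) (subset_convexHull ℝ _ ⟨τ, rfl⟩)
  rw [hf] at hfτ hfv
  exact absurd hτ (not_le.2 (hfτ.trans hfv))

lemma Majorizes.exists_mem_doublyStochastic {u v : Fin n → ℝ} (h : Majorizes u v) :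
    ∃ D ∈ doublyStochastic ℝ (Fin n), D *ᵥ u = v := by
  let L : Matrix (Fin n) (Fin n) ℝ →ₗ[ℝ] Fin n → ℝ :=
    LinearMap.applyₗ u ∘ₗ Matrix.toLin'.toLinearMap
  have hL : L '' doublyStochastic ℝ (Fin n) =
      convexHull ℝ (Set.range fun σ : Perm (Fin n) => u ∘ σ) := by
    rw [doublyStochastic_eq_convexHull_permMatrix, L.image_convexHull]
    congr 1
    ext x
    simp [L, permMatrix_mulVec]
  obtain ⟨D, hD, hDv⟩ := hL ▸ h.mem_convexHull
  exact ⟨D, hD, hDv⟩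

lemma dStoch_iff_mem_doublyStochastic {D : Matrix (Fin n) (Fin n) ℝ} :
    DStoch D ↔ D ∈ doublyStochastic ℝ (Fin n) :=
  mem_doublyStochastic_iff_sum.symm

end Majorization

section Conditional

variable {n m : ℕ}

lemma mul_mul_apply_of_fin_one (D : Matrix (Fin n) (Fin n) ℝ) (P : Matrix (Fin n) (Fin 1) ℝ)
    (R : Matrix (Fin 1) (Fin m) ℝ) (x : Fin n) (w : Fin m) :
    (D * P * R) x w = (D *ᵥ fun y => P y 0) x * R 0 w := by
  simp [Matrix.mul_apply, mulVec, dotProduct]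

lemma CondMaj.majorizes_div_colSum {P : Matrix (Fin n) (Fin 1) ℝ} {Q : Matrix (Fin n) (Fin m) ℝ}
    (hP : ∑ x, P x 0 = 1) (h : CondMaj P Q) {w : Fin m} (hw : 0 < ColSum Q w) :
    Majorizes (fun x => P x 0) (fun x => Q x w / ColSum Q w) := by
  obtain ⟨J, D, R, hD, hR, -, rfl⟩ := h
  simp only [dStoch_iff_mem_doublyStochastic] at hD
  set q := ColSum (∑ j, D j * P * R j) w
  have hcol (x : Fin n) : (∑ j, D j * P * R j) x w = ∑ j, R j 0 w * (D j *ᵥ fun y => P y 0) x := by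
    simp [Matrix.sum_apply, mul_mul_apply_of_fin_one, mul_comm]
  have hq : q = ∑ j, R j 0 w := by
    simp only [q, ColSum, hcol]
    rw [sum_comm]
    simp [← mul_sum, sum_mulVec_of_mem_doublyStochastic (hD _), hP]
  have hD' : ∑ j, (R j 0 w / q) • D j ∈ doublyStochastic ℝ (Fin n) :=
    convex_doublyStochastic.sum_mem (fun j _ => div_nonneg (hR j 0 w) hw.le)
      (by rw [← sum_div, ← hq, div_self hw.ne']) fun j _ => hD j
  convert majorizes_mulVec hD' (fun y => P y 0) using 1
  ext x
  simp [Matrix.sum_mulVec, hcol, sum_div, smul_mulVec, div_mul_eq_mul_div]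

lemma condMaj_of_forall_majorizes {P : Matrix (Fin n) (Fin 1) ℝ} {Q : Matrix (Fin n) (Fin m) ℝ}
    (hQ : JointProb Q)
    (h : ∀ w, 0 < ColSum Q w → Majorizes (fun x => P x 0) (fun x => Q x w / ColSum Q w)) :
    CondMaj P Q := by
  have hq₀ (w : Fin m) : 0 ≤ ColSum Q w := sum_nonneg fun x _ => hQ.1 x w
  have hcol (w : Fin m) : ∃ D ∈ doublyStochastic ℝ (Fin n),
      ∀ x, (D *ᵥ fun y => P y 0) x * ColSum Q w = Q x w := by
    rcases (hq₀ w).lt_or_eq with hw | hw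
    · obtain ⟨D, hD, hDp⟩ := (h w hw).exists_mem_doublyStochastic
      exact ⟨D, hD, fun x => by rw [hDp, div_mul_cancel₀ _ hw.ne']⟩
    · refine ⟨1, one_mem _, fun x => ?_⟩
      rw [← hw, mul_zero, eq_comm]
      exact (sum_eq_zero_iff_of_nonneg fun x _ => hQ.1 x w).1 hw.symm x (mem_univ x)
  choose D hD hDQ using hcol
  set R : Fin m → Matrix (Fin 1) (Fin m) ℝ := fun w => of fun _ => Pi.single w (ColSum Q w)
  have hR₀ (w : Fin m) (y : Fin 1) (w' : Fin m) : 0 ≤ R w y w' := by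
    simp only [R, of_apply, Pi.single_apply]
    split_ifs with hw
    · exact hw ▸ hq₀ w
    · exact le_rfl
  refine ⟨m, D, R, fun w => dStoch_iff_mem_doublyStochastic.2 (hD w), hR₀,
    ⟨fun y w' => ?_, fun y => ?_⟩, ?_⟩
  · rw [Matrix.sum_apply]
    exact sum_nonneg fun w _ => hR₀ w y w'
  · simp only [R, Matrix.sum_apply, of_apply, Finset.sum_pi_single, mem_univ, if_true, ColSum]
    rw [sum_comm]
    exact hQ.2
  · ext x w
    simp [R, Matrix.sum_apply, mul_mul_apply_of_fin_one, Pi.single_apply, hDQ]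

end Conditional

theorem stmt9 {n m : ℕ} (P : Matrix (Fin n) (Fin 1) ℝ) (Q : Matrix (Fin n) (Fin m) ℝ)
    (hP : JointProb P) (hQ : JointProb Q) :
    CondMaj P Q ↔
      ∀ w, 0 < ColSum Q w →
        Majorizes (fun x => P x 0) (fun x => Q x w / ColSum Q w) := by
  have hp : ∑ x, P x 0 = 1 := by simpa only [Fin.sum_univ_one] using hP.2
  exact ⟨fun h _ hw => h.majorizes_div_colSum hp hw, condMaj_of_forall_majorizes hQ⟩
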